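/- arXiv:2202.10797 — 4 statements merged into one kernel-verified Lean document; each statement's English description precedes it below -/
import Mathlib

section
/- The series 1 − 1/2² + 1/4² − 1/5² + 1/7² − 1/8² + ⋯ (terms 1/n² over n not divisible by 3, with alternating signs) converges, and its reciprocal D₃(∞) satisfies 1.27 < D₃(∞) < 1.29. -/
/-!
All blocks of the series are nonnegative, so its first two blocks bound it from below. Since
`x ↦ 1 / x ^ 2` decreases, the block `k ≥ 1` is at most `1 / (6k)² - 1 / (6k + 6)²`, so the
tail after two blocks telescopes to at most `1 / 12²`; both bounds then are rational arithmetic.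
-/

open Finset

theorem sum_range_le_sum_range_add_of_le_sub {f a : ℕ → ℝ} {m : ℕ} (hf : ∀ k, 0 ≤ f k)
    (ha : ∀ k, 0 ≤ a k) (h : ∀ k, m ≤ k → f k ≤ a k - a (k + 1)) (n : ℕ) :
    ∑ k ∈ range n, f k ≤ ∑ k ∈ range m, f k + a m := by
  have htail : ∑ k ∈ range n, f (m + k) ≤ a m - a (m + n) :=
    calc ∑ k ∈ range n, f (m + k) ≤ ∑ k ∈ range n, (a (m + k) - a (m + k + 1)) :=
          sum_le_sum fun k _ => h (m + k) (Nat.le_add_right m k)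
      _ = a m - a (m + n) := sum_range_sub' (fun k => a (m + k)) n
  calc ∑ k ∈ range n, f k ≤ ∑ k ∈ range (m + n), f k :=
        sum_le_sum_of_subset_of_nonneg (range_mono (Nat.le_add_left n m)) fun k _ _ => hf k
    _ = ∑ k ∈ range m, f k + ∑ k ∈ range n, f (m + k) := sum_range_add f m n
    _ ≤ ∑ k ∈ range m, f k + a m := by linarith [ha (m + n)]

noncomputable def coxeterTerm (k : ℕ) : ℝ :=
  1 / ((6 * k + 1 : ℝ)) ^ 2 - 1 / ((6 * k + 2 : ℝ)) ^ 2
    + 1 / ((6 * k + 4 : ℝ)) ^ 2 - 1 / ((6 * k + 5 : ℝ)) ^ 2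

theorem coxeterTerm_nonneg (k : ℕ) : 0 ≤ coxeterTerm k := by
  have h₁ : 1 / ((6 * k + 2 : ℝ)) ^ 2 ≤ 1 / ((6 * k + 1 : ℝ)) ^ 2 := by gcongr; norm_num
  have h₂ : 1 / ((6 * k + 5 : ℝ)) ^ 2 ≤ 1 / ((6 * k + 4 : ℝ)) ^ 2 := by gcongr; norm_num
  unfold coxeterTerm
  linarith

theorem coxeterTerm_le_sub {k : ℕ} (hk : 1 ≤ k) :
    coxeterTerm k ≤ 1 / (6 * k : ℝ) ^ 2 - 1 / (6 * (k + 1 : ℕ) : ℝ) ^ 2 := by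
  have hk₀ : (0 : ℝ) < 6 * k := by positivity
  have h₁ : 1 / ((6 * k + 1 : ℝ)) ^ 2 ≤ 1 / (6 * k : ℝ) ^ 2 := by gcongr; linarith
  have h₂ : 1 / ((6 * k + 4 : ℝ)) ^ 2 ≤ 1 / ((6 * k + 2 : ℝ)) ^ 2 := by gcongr; norm_num
  have h₃ : 1 / (6 * (k + 1 : ℕ) : ℝ) ^ 2 ≤ 1 / ((6 * k + 5 : ℝ)) ^ 2 := by
    gcongr; push_cast; linarith
  unfold coxeterTerm
  linarith

theorem sum_range_coxeterTerm_le (n : ℕ) :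
    ∑ k ∈ range n, coxeterTerm k ≤ ∑ k ∈ range 2, coxeterTerm k + 1 / (6 * 2 : ℝ) ^ 2 := by
  have := sum_range_le_sum_range_add_of_le_sub (m := 2) coxeterTerm_nonneg
    (fun k => by positivity) (fun k hk => coxeterTerm_le_sub (by omega)) n
  simpa using this

theorem summable_coxeterTerm : Summable coxeterTerm :=
  summable_of_sum_range_le coxeterTerm_nonneg sum_range_coxeterTerm_le

theorem tsum_coxeterTerm_lt : ∑' k, coxeterTerm k < 1.27⁻¹ :=
  calc ∑' k, coxeterTerm k ≤ ∑ k ∈ range 2, coxeterTerm k + 1 / (6 * 2 : ℝ) ^ 2 :=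
        Real.tsum_le_of_sum_range_le coxeterTerm_nonneg sum_range_coxeterTerm_le
    _ < 1.27⁻¹ := by norm_num [sum_range_succ, coxeterTerm]

theorem lt_tsum_coxeterTerm : 1.29⁻¹ < ∑' k, coxeterTerm k :=
  calc (1.29⁻¹ : ℝ) < ∑ k ∈ range 2, coxeterTerm k := by norm_num [sum_range_succ, coxeterTerm]
    _ ≤ ∑' k, coxeterTerm k :=
        summable_coxeterTerm.sum_le_tsum _ fun k _ => coxeterTerm_nonneg k

/-- Coxeter's horoball covering density series: the series
`T = Σ_{k≥0} [1/(6k+1)² − 1/(6k+2)² + 1/(6k+4)² − 1/(6k+5)²]` converges and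
`D₃(∞) = 1/T` satisfies `1.27 < D₃(∞) < 1.29`. -/
theorem coxeter_covering_density_bounds :
    Summable (fun k : ℕ =>
      1 / ((6 * k + 1 : ℝ)) ^ 2 - 1 / ((6 * k + 2 : ℝ)) ^ 2
        + 1 / ((6 * k + 4 : ℝ)) ^ 2 - 1 / ((6 * k + 5 : ℝ)) ^ 2) ∧
    1.27 < (∑' k : ℕ,
      (1 / ((6 * k + 1 : ℝ)) ^ 2 - 1 / ((6 * k + 2 : ℝ)) ^ 2
        + 1 / ((6 * k + 4 : ℝ)) ^ 2 - 1 / ((6 * k + 5 : ℝ)) ^ 2))⁻¹ ∧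
    (∑' k : ℕ,
      (1 / ((6 * k + 1 : ℝ)) ^ 2 - 1 / ((6 * k + 2 : ℝ)) ^ 2
        + 1 / ((6 * k + 4 : ℝ)) ^ 2 - 1 / ((6 * k + 5 : ℝ)) ^ 2))⁻¹ < 1.29 := by
  change Summable coxeterTerm ∧ 1.27 < (∑' k, coxeterTerm k)⁻¹ ∧ (∑' k, coxeterTerm k)⁻¹ < 1.29
  have hpos : 0 < ∑' k, coxeterTerm k := lt_trans (by norm_num) lt_tsum_coxeterTerm
  exact ⟨summable_coxeterTerm, (lt_inv_comm₀ (by norm_num : (0 : ℝ) < 1.27) hpos).mpr tsum_coxeterTerm_lt,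
    (inv_lt_comm₀ hpos (by norm_num : (0 : ℝ) < 1.29)).mpr lt_tsum_coxeterTerm⟩
end

section
/- The local circle-packing density bound in the hyperbolic plane, d₂(r) = (3α/π)·(area of the circle of radius r)/(area of the equilateral triangle with vertices at the centers of three mutually tangent circles of radius r), where the triangle has angle 2α at each vertex with sin α = 1/(2 cosh r), is strictly increasing in r and tends to 3/π as r → ∞. -/
open Filter Real

private lemma sqrt3_gt : (1.7320508 : ℝ) < Real.sqrt 3 := by
  have h3 : Real.sqrt 3 ^ 2 = 3 := Real.sq_sqrt (by norm_num)
  have hq0 : (0:ℝ) < Real.sqrt 3 := by positivity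
  nlinarith

private lemma sqrt3_lt : Real.sqrt 3 < (1.7320509 : ℝ) := by
  have h3 : Real.sqrt 3 ^ 2 = 3 := Real.sq_sqrt (by norm_num)
  have hq0 : (0:ℝ) < Real.sqrt 3 := by positivity
  nlinarith

set_option maxHeartbeats 1000000 in
private lemma keyA {a : ℝ} (h0 : 0 < a) (h1 : a ≤ 0.2618) :
    π * Real.sin a * (1 - 2 * Real.sin a) < a * (π - 6*a) * Real.cos a := by
  have hpi1 : (3.141592 : ℝ) < π := Real.pi_gt_d6
  have hpi2 : π < 3.141593 := Real.pi_lt_d6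
  have habs : |a| ≤ 1 := by rw [abs_of_pos h0]; nlinarith
  have hs := Real.sin_bound habs
  have hc := Real.cos_bound habs
  rw [abs_le] at hs hc
  rw [abs_of_pos h0] at hs hc
  obtain ⟨hs1, hs2⟩ := hs
  obtain ⟨hc1, hc2⟩ := hc
  set s := Real.sin a with hsdef
  set c := Real.cos a with hcdef
  have hPpos : 0 < a - a^3/6 - a^4*(5/96) := by nlinarith
  have hspos : 0 < s := by nlinarith
  have hcoef : 0 < a * (π - 6*a) := by
    apply mul_pos h0; nlinarith
  have hL : π * s * (1 - 2*s) ≤ π * (a - a^3/6 + a^4*(5/96)) - 2*π*(a - a^3/6 - a^4*(5/96))^2 := by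
    have h2 : s^2 ≥ (a - a^3/6 - a^4*(5/96))^2 := by
      have hsP : a - a^3/6 - a^4*(5/96) ≤ s := by nlinarith [mul_le_mul_of_nonneg_left h1 (pow_pos h0 4).le]
      nlinarith
    have hpip : (0:ℝ) < π := by linarith
    nlinarith [mul_le_mul_of_nonneg_left h2 hpip.le]
  have hR : a * (π - 6*a) * (1 - a^2/2 - a^4*(5/96)) ≤ a * (π - 6*a) * c :=
    mul_le_mul_of_nonneg_left (by linarith) hcoef.le
  have hfinal : π * (a - a^3/6 + a^4*(5/96)) - 2*π*(a - a^3/6 - a^4*(5/96))^2 <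
      a * (π - 6*a) * (1 - a^2/2 - a^4*(5/96)) := by
    have hq : 0 < (2*π-6) - (π/3)*a + (3 - 23*π/32)*a^2 - (25*π/96)*a^3
        + (5/16 + π/18)*a^4 + (5*π/144)*a^5 + (25*π/4608)*a^6 := by
      have h4 : 0 ≤ a^4 := by positivity
      have h5 : 0 ≤ a^5 := by positivity
      have h6 : 0 ≤ a^6 := by positivity
      have hcube : a^3 ≤ 0.2618 * a^2 := by nlinarith [sq_nonneg a]
      nlinarith [mul_nonneg h0.le (sub_nonneg.2 h1), sq_nonneg a, sq_nonneg (a - 0.2618)]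
    nlinarith [mul_pos (mul_pos h0 h0) hq]
  linarith

set_option maxHeartbeats 1000000 in
private lemma qb_pos {t : ℝ} (h0 : 0 < t) (h1 : t ≤ 0.2618) :
    0 < (7/4*π - 3*Real.sqrt 3) + (π*Real.sqrt 3/3 - 3)*t
      + (-(31/64)*π + 3/2*Real.sqrt 3 - 5/192*π*Real.sqrt 3)*t^2
      + (1/2 - 5/192*π - 7/64*π*Real.sqrt 3)*t^3 + (π/24 + 5/32 + 5/32*Real.sqrt 3)*t^4
      + (-(25/4608)*π - 25/9216*π*Real.sqrt 3)*t^6 := by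
  have hpi1 : (3.141592 : ℝ) < π := Real.pi_gt_d6
  have hpi2 : π < 3.141593 := Real.pi_lt_d6
  have hq1 := sqrt3_gt
  have hq2 := sqrt3_lt
  set q := Real.sqrt 3 with hqdef
  have hpq1 : (5.4413969:ℝ) < π*q := by nlinarith [mul_pos (sub_pos.2 hpi1) (sub_pos.2 hq1)]
  have hpq2 : π*q < 5.441399 := by nlinarith [mul_pos (sub_pos.2 hpi2) (sub_pos.2 hq2)]
  have c1 : (0.3016:ℝ) ≤ 7/4*π - 3*q := by linarith
  have c2 : (-1.18621:ℝ) ≤ π*q/3 - 3 := by linarith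
  have c3 : (0.9346:ℝ) ≤ -(31/64)*π + 3/2*q - 5/192*π*q := by linarith
  have c4 : (-0.17706:ℝ) ≤ 1/2 - 5/192*π - 7/64*π*q := by linarith
  have c5 : (0:ℝ) ≤ π/24 + 5/32 + 5/32*q := by linarith
  have c6 : (-0.031808:ℝ) ≤ -(25/4608)*π - 25/9216*π*q := by linarith
  have ht3 : t^3 ≤ 0.2618*t^2 := by nlinarith [sq_nonneg t]
  have hsix : t^6 ≤ 0.2618^4 * t^2 := by
    have h2 : t^2 ≤ 0.2618^2 := by nlinarith
    have h4 : t^4 ≤ 0.2618^4 := by nlinarith [sq_nonneg t]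
    calc t^6 = t^4 * t^2 := by ring
      _ ≤ 0.2618^4 * t^2 := mul_le_mul_of_nonneg_right h4 (sq_nonneg t)
  nlinarith [mul_nonneg (sub_nonneg.2 c2) h0.le, mul_nonneg (sub_nonneg.2 c3) (sq_nonneg t),
    mul_nonneg (sub_nonneg.2 c4) (pow_nonneg h0.le 3), mul_nonneg c5 (pow_nonneg h0.le 4),
    mul_nonneg (sub_nonneg.2 c6) (pow_nonneg h0.le 6), ht3, hsix, sq_nonneg (t-0.2618)]

private lemma expand_eq {q : ℝ} (h3 : q^2 = 3) (t : ℝ) :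
    (π/6 - t) * (6*t) * ((q * (1 - t^2/2 - t^4*(5/96)) + (t - t^3/6 - t^4*(5/96)))/2)
      - π * (((1 - t^2/2 + t^4*(5/96)) - q * (t - t^3/6 - t^4*(5/96)))/2) *
        (1 - (1 - t^2/2 - t^4*(5/96)) + q * (t - t^3/6 + t^4*(5/96)))
      = t^2 * ((7/4*π - 3*q) + (π*q/3 - 3)*t + (-(31/64)*π + 3/2*q - 5/192*π*q)*t^2
      + (1/2 - 5/192*π - 7/64*π*q)*t^3 + (π/24 + 5/32 + 5/32*q)*t^4
      + (-(25/4608)*π - 25/9216*π*q)*t^6) := by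
  linear_combination (π/2*(t - t^3/6 - t^4*(5/96))*(t - t^3/6 + t^4*(5/96))) * h3

set_option maxHeartbeats 1000000 in
private lemma keyB {t : ℝ} (h0 : 0 < t) (h1 : t ≤ 0.2618) :
    π * ((Real.cos t - Real.sqrt 3 * Real.sin t)/2) * (1 - (Real.cos t - Real.sqrt 3 * Real.sin t))
      < (π/6 - t) * (6*t) * ((Real.sqrt 3 * Real.cos t + Real.sin t)/2) := by
  have hpi1 : (3.141592 : ℝ) < π := Real.pi_gt_d6
  have hpi2 : π < 3.141593 := Real.pi_lt_d6
  have h3 : Real.sqrt 3 ^ 2 = 3 := Real.sq_sqrt (by norm_num)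
  have hq0 : (0:ℝ) < Real.sqrt 3 := by positivity
  have hq1 := sqrt3_gt
  have hq2 := sqrt3_lt
  have habs : |t| ≤ 1 := by rw [abs_of_pos h0]; nlinarith
  have hs := Real.sin_bound habs
  have hc := Real.cos_bound habs
  rw [abs_le] at hs hc
  rw [abs_of_pos h0] at hs hc
  obtain ⟨hs1, hs2⟩ := hs
  obtain ⟨hc1, hc2⟩ := hc
  set s := Real.sin t with hsdef
  set c := Real.cos t with hcdef
  set q := Real.sqrt 3 with hqdef
  have ht2 : t^2 ≤ 0.2618*t := by nlinarith
  have ht3 : t^3 ≤ 0.2618*t^2 := by nlinarith [sq_nonneg t]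
  have ht4 : t^4 ≤ 0.2618*t^3 := by nlinarith [pow_pos h0 3]
  have hsm : (0:ℝ) < t - t^3/6 - t^4*(5/96) := by nlinarith
  have hsp : (0:ℝ) < t - t^3/6 + t^4*(5/96) := by linarith
  have hspos : 0 < s := by nlinarith
  have hcm : (0:ℝ) < 1 - t^2/2 - t^4*(5/96) := by nlinarith
  have hcle : c ≤ 1 := Real.cos_le_one t
  have hql : q * (t - t^3/6 - t^4*(5/96)) ≤ q * s := by nlinarith
  have hqu : q * s ≤ q * (t - t^3/6 + t^4*(5/96)) := by nlinarith
  have hqb : q * (t - t^3/6 + t^4*(5/96)) ≤ 1.7320509 * t := by nlinarith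
  have hY : 1 - c + q * s ≤ 1 - (1 - t^2/2 - t^4*(5/96)) + q * (t - t^3/6 + t^4*(5/96)) := by
    linarith
  have hYpos : 0 ≤ 1 - c + q * s := by nlinarith
  have hX : c - q * s ≤ (1 - t^2/2 + t^4*(5/96)) - q * (t - t^3/6 - t^4*(5/96)) := by
    linarith
  have hXupos : 0 ≤ (1 - t^2/2 + t^4*(5/96)) - q * (t - t^3/6 - t^4*(5/96)) := by
    nlinarith
  have hL : (c - q*s) * (1 - c + q*s) ≤
      ((1 - t^2/2 + t^4*(5/96)) - q * (t - t^3/6 - t^4*(5/96))) *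
      (1 - (1 - t^2/2 - t^4*(5/96)) + q * (t - t^3/6 + t^4*(5/96))) := by
    calc (c - q*s) * (1 - c + q*s)
        ≤ ((1 - t^2/2 + t^4*(5/96)) - q * (t - t^3/6 - t^4*(5/96))) * (1 - c + q*s) :=
          mul_le_mul_of_nonneg_right hX hYpos
      _ ≤ _ := mul_le_mul_of_nonneg_left hY hXupos
  have hcoef : 0 < (π/6 - t) * (6*t) := by
    apply mul_pos _ (by linarith); nlinarith
  have hR : (π/6 - t) * (6*t) * ((q * (1 - t^2/2 - t^4*(5/96)) + (t - t^3/6 - t^4*(5/96)))/2)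
      ≤ (π/6 - t) * (6*t) * ((q*c + s)/2) := by
    apply mul_le_mul_of_nonneg_left _ hcoef.le
    have : q * (1 - t^2/2 - t^4*(5/96)) ≤ q * c := by nlinarith
    nlinarith [mul_le_mul_of_nonneg_left h1 (pow_pos h0 4).le]
  have hQB := qb_pos h0 h1
  rw [← hqdef] at hQB
  have hexp := expand_eq h3 t
  have hpip : (0:ℝ) < π := by linarith
  have h2 : π * ((c - q*s)/2) * (1 - (c - q*s)) ≤
      π * (((1 - t^2/2 + t^4*(5/96)) - q * (t - t^3/6 - t^4*(5/96)))/2) *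
        (1 - (1 - t^2/2 - t^4*(5/96)) + q * (t - t^3/6 + t^4*(5/96))) := by
    linarith [mul_le_mul_of_nonneg_left hL (by linarith : (0:ℝ) ≤ π/2)]
  linarith [mul_pos (mul_pos h0 h0) hQB]

private lemma key {a : ℝ} (h0 : 0 < a) (h1 : a < π/6) :
    π * Real.sin a * (1 - 2 * Real.sin a) < a * (π - 6*a) * Real.cos a := by
  rcases le_or_gt a 0.2618 with h | h
  · exact keyA h0 h
  · have hpi2 : π < 3.141593 := Real.pi_lt_d6
    have h0t : 0 < π/6 - a := by linarith
    have h1t : π/6 - a ≤ 0.2618 := by linarith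
    have hk := keyB h0t h1t
    have h3 : Real.sqrt 3 ^ 2 = 3 := Real.sq_sqrt (by norm_num)
    have e1 : Real.cos (π/6 - a) - Real.sqrt 3 * Real.sin (π/6 - a) = 2 * Real.sin a := by
      rw [Real.cos_sub, Real.sin_sub, Real.sin_pi_div_six, Real.cos_pi_div_six]
      linear_combination (Real.sin a / 2) * h3
    have e2 : Real.sqrt 3 * Real.cos (π/6 - a) + Real.sin (π/6 - a) = 2 * Real.cos a := by
      rw [Real.cos_sub, Real.sin_sub, Real.sin_pi_div_six, Real.cos_pi_div_six]
      linear_combination (Real.cos a / 2) * h3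
    rw [e1, e2] at hk
    nlinarith [hk]

private lemma arcsin_lt_pi_div_six {x : ℝ} (hx : x < 1/2) : Real.arcsin x < π/6 := by
  rw [Real.arcsin_lt_iff_lt_sin' ⟨by linarith [Real.pi_pos], by linarith [Real.pi_pos]⟩]
  rwa [Real.sin_pi_div_six]

set_option maxHeartbeats 1000000 in
/-- The local circle-packing density bound in the hyperbolic plane:
`d₂(r) = 6α(cosh r − 1)/(π − 6α)` with `α = arcsin(1/(2 cosh r))` is the density of three
mutually tangent circles of radius `r` in the equilateral triangle spanned by their centers.
It is strictly increasing on `(0,∞)` and tends to `3/π` as `r → ∞`. -/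
theorem hyperbolic_local_density_monotone_and_limit :
    StrictMonoOn
      (fun r : ℝ =>
        6 * Real.arcsin (1 / (2 * Real.cosh r)) * (Real.cosh r - 1) /
          (π - 6 * Real.arcsin (1 / (2 * Real.cosh r)))) (Set.Ioi 0) ∧
    Tendsto
      (fun r : ℝ =>
        6 * Real.arcsin (1 / (2 * Real.cosh r)) * (Real.cosh r - 1) /
          (π - 6 * Real.arcsin (1 / (2 * Real.cosh r)))) atTop (nhds (3 / π)) := by
  have hpi : (0:ℝ) < π := Real.pi_pos
  have hxlt : ∀ r : ℝ, r ≠ 0 → (2 * Real.cosh r)⁻¹ < 1/2 := by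
    intro r hr
    have hc1 : 1 < Real.cosh r := Real.one_lt_cosh.2 hr
    rw [inv_lt_comm₀ (by positivity) (by norm_num)]
    norm_num; exact hr
  have hxpos : ∀ r : ℝ, 0 < (2 * Real.cosh r)⁻¹ := by
    intro r; have := Real.cosh_pos r; positivity
  have hxle : ∀ r : ℝ, (2 * Real.cosh r)⁻¹ ≤ 1/2 := by
    intro r
    have h1 : (1:ℝ) ≤ Real.cosh r := Real.one_le_cosh r
    rw [inv_le_comm₀ (by positivity) (by norm_num)]
    norm_num
  have hDpos : ∀ r : ℝ, r ≠ 0 → 0 < π - 6 * Real.arcsin ((2 * Real.cosh r)⁻¹) := by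
    intro r hr
    have := arcsin_lt_pi_div_six (hxlt r hr)
    linarith
  have hfun : (fun r : ℝ =>
        6 * Real.arcsin (1 / (2 * Real.cosh r)) * (Real.cosh r - 1) /
          (π - 6 * Real.arcsin (1 / (2 * Real.cosh r))))
      = (fun r : ℝ =>
        6 * Real.arcsin ((2 * Real.cosh r)⁻¹) * (Real.cosh r - 1) /
          (π - 6 * Real.arcsin ((2 * Real.cosh r)⁻¹))) := by
    funext r; rw [one_div]
  constructor
  · -- monotonicity
    rw [hfun]
    have hcontA : Continuous fun r : ℝ => Real.arcsin ((2 * Real.cosh r)⁻¹) :=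
      Real.continuous_arcsin.comp ((continuous_const.mul Real.continuous_cosh).inv₀
        fun x => by have := Real.cosh_pos x; exact (mul_pos two_pos this).ne')
    apply strictMonoOn_of_deriv_pos (convex_Ioi 0)
    · apply ContinuousOn.div
      · exact ((continuous_const.mul hcontA).mul
          (Real.continuous_cosh.sub continuous_const)).continuousOn
      · exact (continuous_const.sub (continuous_const.mul hcontA)).continuousOn
      · intro r hr
        exact ne_of_gt (hDpos r (ne_of_gt (Set.mem_Ioi.1 hr)))
    · intro r hr
      rw [interior_Ioi] at hr
      have hr0 : 0 < r := hr
      have hrne : r ≠ 0 := ne_of_gt hr0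
      have hc1 : 1 < Real.cosh r := Real.one_lt_cosh.2 hrne
      have hs : 0 < Real.sinh r := Real.sinh_pos_iff.2 hr0
      have hcpos : (0:ℝ) < Real.cosh r := Real.cosh_pos r
      have hx1 : (2*Real.cosh r)⁻¹ < 1/2 := hxlt r hrne
      have hx0 : 0 < (2*Real.cosh r)⁻¹ := hxpos r
      have hne1 : (2*Real.cosh r)⁻¹ ≠ -1 := by linarith
      have hne2 : (2*Real.cosh r)⁻¹ ≠ 1 := by linarith
      have hcosh := Real.hasDerivAt_cosh r
      have h2c : HasDerivAt (fun y => 2 * Real.cosh y) (2 * Real.sinh r) r := hcosh.const_mul 2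
      have hxinv : HasDerivAt (fun y => (2 * Real.cosh y)⁻¹)
          (-(2 * Real.sinh r) / (2 * Real.cosh r)^2) r := h2c.inv (by positivity)
      have hA' : HasDerivAt (fun y => Real.arcsin ((2 * Real.cosh y)⁻¹))
          (1 / Real.sqrt (1 - ((2*Real.cosh r)⁻¹)^2) * (-(2 * Real.sinh r) / (2 * Real.cosh r)^2)) r :=
        by have := (Real.hasDerivAt_arcsin hne1 hne2).comp r hxinv; exact this
      have hN : HasDerivAt (fun y => 6 * Real.arcsin ((2 * Real.cosh y)⁻¹) * (Real.cosh y - 1))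
          ((6 * (1 / Real.sqrt (1 - ((2*Real.cosh r)⁻¹)^2) * (-(2 * Real.sinh r) / (2 * Real.cosh r)^2))) * (Real.cosh r - 1)
            + (6 * Real.arcsin ((2*Real.cosh r)⁻¹)) * Real.sinh r) r :=
        (hA'.const_mul 6).mul (hcosh.sub_const 1)
      have hApos : 0 < Real.arcsin ((2*Real.cosh r)⁻¹) := Real.arcsin_pos.2 hx0
      have hA6 : Real.arcsin ((2*Real.cosh r)⁻¹) < π/6 := arcsin_lt_pi_div_six hx1
      have hDpos' : 0 < π - 6 * Real.arcsin ((2*Real.cosh r)⁻¹) := by linarith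
      have hD : HasDerivAt (fun y => π - 6 * Real.arcsin ((2 * Real.cosh y)⁻¹))
          (-((6 * (1 / Real.sqrt (1 - ((2*Real.cosh r)⁻¹)^2) * (-(2 * Real.sinh r) / (2 * Real.cosh r)^2))))) r :=
        (hA'.const_mul 6).const_sub π
      have hF := hN.div hD (ne_of_gt hDpos')
      rw [show deriv (fun r => 6 * Real.arcsin ((2 * Real.cosh r)⁻¹) * (Real.cosh r - 1) / (π - 6 * Real.arcsin ((2 * Real.cosh r)⁻¹))) r = _ from hF.deriv]
      set A := Real.arcsin ((2*Real.cosh r)⁻¹) with hAdef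
      set u := Real.sqrt (1 - ((2*Real.cosh r)⁻¹)^2) with hudef
      set c := Real.cosh r with hcdef
      set s := Real.sinh r with hsdef
      have hupos : 0 < u := Real.sqrt_pos.2 (by nlinarith)
      have hu : u = Real.cos A := (Real.cos_arcsin _).symm
      have hsA : Real.sin A = (2*c)⁻¹ := Real.sin_arcsin (by linarith) (by linarith)
      have hkey := key hApos hA6
      rw [hsA, ← hu] at hkey
      have hnum : ((6 * (1 / u * (-(2 * s) / (2 * c)^2))) * (c - 1) + (6 * A) * s) * (π - 6*A)
            - (6 * A * (c - 1)) * (-(6 * (1 / u * (-(2 * s) / (2 * c)^2))))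
          = (6*s/u) * (A*(π-6*A)*u - π*(2*c)⁻¹*(1 - 2*(2*c)⁻¹)) := by
        field_simp
        ring
      apply div_pos
      · rw [hnum]
        apply mul_pos (by positivity)
        linarith
      · positivity
  · -- limit
    have hcosh_top : Tendsto Real.cosh atTop atTop := by
      apply tendsto_atTop_mono (fun x => ?_) (Real.tendsto_exp_atTop.atTop_div_const two_pos)
      rw [Real.cosh_eq]
      have := Real.exp_pos (-x)
      linarith
    have h2c : Tendsto (fun r : ℝ => 2 * Real.cosh r) atTop atTop :=
      hcosh_top.const_mul_atTop two_pos
    have hx0 : Tendsto (fun r : ℝ => 1 / (2 * Real.cosh r)) atTop (nhds 0) := by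
      simp only [one_div]
      exact h2c.inv_tendsto_atTop
    have hx0' : Tendsto (fun r : ℝ => 1 / (2 * Real.cosh r)) atTop (nhdsWithin 0 {0}ᶜ) := by
      rw [tendsto_nhdsWithin_iff]
      refine ⟨hx0, Filter.Eventually.of_forall fun r => ?_⟩
      have := hxpos r
      rw [one_div]
      exact ne_of_gt this
    have hslope : Tendsto (fun x : ℝ => Real.arcsin x / x) (nhdsWithin 0 {0}ᶜ) (nhds 1) := by
      have hd : HasDerivAt Real.arcsin 1 0 := by
        have := Real.hasDerivAt_arcsin (by norm_num : (0:ℝ) ≠ -1) (by norm_num : (0:ℝ) ≠ 1)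
        simpa using this
      have := hasDerivAt_iff_tendsto_slope.1 hd
      apply this.congr'
      filter_upwards [self_mem_nhdsWithin] with x hx
      rw [slope_def_field, Real.arcsin_zero]
      simp
    have hratio : Tendsto (fun r : ℝ => Real.arcsin (1 / (2 * Real.cosh r)) / (1 / (2 * Real.cosh r)))
        atTop (nhds 1) := hslope.comp hx0'
    have harc0 : Tendsto (fun r : ℝ => Real.arcsin (1 / (2 * Real.cosh r))) atTop (nhds 0) := by
      have := (Real.continuous_arcsin.tendsto 0).comp hx0
      simpa [Function.comp_def] using this
    have hnum : Tendsto (fun r : ℝ => 3 * (Real.arcsin (1 / (2 * Real.cosh r)) / (1 / (2 * Real.cosh r)))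
        - 6 * Real.arcsin (1 / (2 * Real.cosh r))) atTop (nhds 3) := by
      have := ((hratio.const_mul 3).sub (harc0.const_mul 6))
      simpa using this
    have hden : Tendsto (fun r : ℝ => π - 6 * Real.arcsin (1 / (2 * Real.cosh r))) atTop (nhds π) := by
      have := (tendsto_const_nhds (x := π) (f := atTop)).sub (harc0.const_mul 6)
      simpa using this
    have := hnum.div hden (ne_of_gt hpi)
    apply this.congr
    intro r
    have hc' : Real.cosh r ≠ 0 := ne_of_gt (Real.cosh_pos r)
    simp only [Pi.div_apply]
    congr 1
    field_simp
    ring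
end

section
/- With d₂(r) = 6α(r)(cosh r − 1)/(π − 6α(r)) where α(r) = arcsin(1/(2 cosh r)), one has d₂(r) < 3/π for every r > 0. -/
/-!
Put `α = arcsin (1 / (2 cosh r)) ∈ (0, π/6)`, so that `cosh r = 1 / (2 sin α)`. After clearing
denominators, `d₂(r) < 3/π` becomes `1/sin α - 1/α < 1/sin (π/6) - 1/(π/6)`, which holds because
`t ↦ 1/sin t - 1/t` is strictly increasing on `(0, 1]`: its derivative
`(sin² t - t² cos t) / (t² sin² t)` is positive there, by the Taylor bounds on `sin` and `cos`.
-/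

open Real Set

lemma sq_mul_cos_lt_sin_sq {t : ℝ} (ht : 0 < t) (ht1 : t ≤ 1) : t ^ 2 * cos t < sin t ^ 2 := by
  have hsin : t - t ^ 3 / 4 < sin t := by nlinarith [sin_gt_sub_cube ht, pow_pos ht 3]
  have hcos : cos t ≤ 1 - t ^ 2 / 2 + t ^ 4 * (5 / 96) := by
    have := (abs_le.1 (cos_bound (by rwa [abs_of_pos ht]))).2
    rw [abs_of_pos ht] at this
    linarith
  have hpos : 0 < t - t ^ 3 / 4 := by nlinarith
  nlinarith [mul_pos hpos hpos, mul_lt_mul_of_pos_left hsin hpos, mul_pos ht ht,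
    sq_nonneg (t ^ 2), sq_nonneg (t ^ 3)]

lemma hasDerivAt_inv_sin_sub_inv {t : ℝ} (ht : t ≠ 0) (hsin : sin t ≠ 0) :
    HasDerivAt (fun x : ℝ => (sin x)⁻¹ - x⁻¹)
      ((sin t ^ 2 - t ^ 2 * cos t) / (sin t ^ 2 * t ^ 2)) t := by
  refine (((hasDerivAt_sin t).inv hsin).sub (hasDerivAt_inv ht)).congr_deriv ?_
  field_simp
  ring

lemma strictMonoOn_inv_sin_sub_inv : StrictMonoOn (fun t : ℝ => (sin t)⁻¹ - t⁻¹) (Ioc 0 1) := by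
  have hsin_pos : ∀ t ∈ Ioc (0 : ℝ) 1, 0 < sin t := fun t ht =>
    sin_pos_of_pos_of_lt_pi ht.1 (ht.2.trans_lt (by linarith [pi_gt_three]))
  apply strictMonoOn_of_deriv_pos (convex_Ioc 0 1)
  · exact (continuous_sin.continuousOn.inv₀ fun t ht => (hsin_pos t ht).ne').sub
      (continuousOn_id.inv₀ fun t ht => ht.1.ne')
  · intro t ht
    rw [interior_Ioc] at ht
    have hsin := hsin_pos t (Ioo_subset_Ioc_self ht)
    rw [(hasDerivAt_inv_sin_sub_inv ht.1.ne' hsin.ne').deriv]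
    exact div_pos (sub_pos.2 (sq_mul_cos_lt_sin_sq ht.1 ht.2.le))
      (mul_pos (pow_pos hsin 2) (pow_pos ht.1 2))

lemma inv_two_cosh_mem_Ioo {r : ℝ} (hr : 0 < r) : 1 / (2 * cosh r) ∈ Ioo 0 (1 / 2) := by
  have hc : 1 < cosh r := one_lt_cosh.2 hr.ne'
  exact ⟨div_pos one_pos (by linarith), (div_lt_div_iff₀ (by linarith) two_pos).2 (by linarith)⟩

lemma arcsin_mem_Ioo_of_mem_Ioo {x : ℝ} (hx : x ∈ Ioo 0 (1 / 2)) : arcsin x ∈ Ioo 0 (π / 6) := by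
  refine ⟨arcsin_pos.2 hx.1, ?_⟩
  rw [← arcsin_sin (x := π / 6) (by linarith [pi_pos]) (by linarith [pi_pos]), sin_pi_div_six]
  exact strictMonoOn_arcsin ⟨by linarith [hx.1], by linarith [hx.2]⟩ ⟨by norm_num, by norm_num⟩ hx.2

lemma six_mul_mul_div_lt_three_div_pi {a : ℝ} (ha : 0 < a) (ha6 : a < π / 6) :
    6 * a * (1 / (2 * sin a) - 1) / (π - 6 * a) < 3 / π := by
  have hπ := pi_pos
  have hmono := strictMonoOn_inv_sin_sub_inv ⟨ha, by linarith [pi_lt_d2]⟩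
    ⟨by positivity, by linarith [pi_lt_d2]⟩ ha6
  simp only [sin_pi_div_six] at hmono
  have hsin : 0 < sin a := sin_pos_of_pos_of_lt_pi ha (by linarith)
  rw [div_lt_div_iff₀ (by linarith) hπ]
  field_simp at hmono ⊢
  linear_combination 6 * hmono

/-- With `d₂(r) = 6α(r)(cosh r − 1)/(π − 6α(r))`, `α(r) = arcsin(1/(2 cosh r))`, the local
hyperbolic circle-packing density bound satisfies `d₂(r) < 3/π` for every `r > 0`. -/
theorem hyperbolic_local_density_lt_horocycle_bound (r : ℝ) (hr : 0 < r) :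
    6 * Real.arcsin (1 / (2 * Real.cosh r)) * (Real.cosh r - 1) /
      (π - 6 * Real.arcsin (1 / (2 * Real.cosh r))) < 3 / π := by
  have hx := inv_two_cosh_mem_Ioo hr
  obtain ⟨ha, ha6⟩ := arcsin_mem_Ioo_of_mem_Ioo hx
  have hcosh : 1 / (2 * sin (arcsin (1 / (2 * cosh r)))) = cosh r := by
    rw [sin_arcsin (by linarith [hx.1]) (by linarith [hx.2])]
    field_simp
  simpa only [hcosh] using six_mul_mul_div_lt_three_div_pi ha ha6
end

section
/- A convex region in the Euclidean plane containing a unit disk and contained in the Dirichlet cell of a unit circle packing (equivalently, any convex polygon with at most 6 sides circumscribed about the unit disk) has area at least 2√3, the area of the regular circumscribed hexagon. -/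
open Metric MeasureTheory
open scoped RealInnerProductSpace

open Set Real Fintype
open scoped ENNReal

/-!
Shrinking every `b i` to `1` and passing to `ℂ`, the polygon contains the star-shaped region
`‖z‖ ≤ g (arg z)⁻¹`, where `g θ = max (cos (π / 6)) (maxᵢ cos (θ - arg (u i)))`; its area is
`∫ g⁻² / 2` over a period. Since `{g ≥ cos w}` is covered by six arcs of length `2 w`, every
sublevel set `{g < q}` is at least as large as the corresponding one of `s ↦ cos (s / 12)` on
`(0, 2π)`, so by the layer-cake formula
`∫ g⁻² / 2 ≥ ∫₀^{2π} (2 cos² (s / 12))⁻¹ ds = 6 tan (π / 6) = 2√3`.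
-/

theorem lintegral_ofReal_le_of_meas_lt_le {α β : Type*} [MeasurableSpace α] [MeasurableSpace β]
    {μ : Measure α} {ν : Measure β} {f : α → ℝ} {g : β → ℝ}
    (hf : 0 ≤ᵐ[μ] f) (hf' : AEMeasurable f μ) (hg : 0 ≤ᵐ[ν] g) (hg' : AEMeasurable g ν)
    (h : ∀ t > 0, ν {x | t < g x} ≤ μ {x | t < f x}) :
    ∫⁻ x, ENNReal.ofReal (g x) ∂ν ≤ ∫⁻ x, ENNReal.ofReal (f x) ∂μ := by
  rw [lintegral_eq_lintegral_meas_lt μ hf hf', lintegral_eq_lintegral_meas_lt ν hg hg']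
  exact setLIntegral_mono' measurableSet_Ioi h

theorem setLIntegral_Ioc_ofReal_id {a : ℝ} (ha : 0 ≤ a) :
    ∫⁻ r in Ioc 0 a, ENNReal.ofReal r = ENNReal.ofReal (a ^ 2 / 2) := by
  rw [← ofReal_integral_eq_lintegral_ofReal]
  · rw [← intervalIntegral.integral_of_le ha, integral_id]
    ring_nf
  · exact continuous_id.integrableOn_Ioc
  · exact (ae_restrict_iff' measurableSet_Ioc).2 (ae_of_all _ fun _ hr => hr.1.le)

theorem volume_setOf_norm_le_comp_arg {ρ : ℝ → ℝ} (hρ : Measurable ρ) (hρ₀ : ∀ θ, 0 ≤ ρ θ) :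
    volume {z : ℂ | ‖z‖ ≤ ρ (Complex.arg z)} =
      ∫⁻ θ in Ioo (-π) π, ENNReal.ofReal (ρ θ ^ 2 / 2) := by
  set R := {z : ℂ | ‖z‖ ≤ ρ (Complex.arg z)}
  set S := {p : ℝ × ℝ | p.1 ≤ ρ p.2}
  have hR : MeasurableSet R := measurableSet_le measurable_norm (hρ.comp Complex.measurable_arg)
  have hS : MeasurableSet S := measurableSet_le measurable_fst (hρ.comp measurable_snd)
  have hpolar : ∀ p ∈ polarCoord.target,
      ENNReal.ofReal p.1 • R.indicator 1 (Complex.polarCoord.symm p) =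
        S.indicator (fun p => ENNReal.ofReal p.1) p := by
    intro p hp
    have hp' : (‖Complex.polarCoord.symm p‖, Complex.arg (Complex.polarCoord.symm p)) = p := by
      rw [← Complex.polarCoord_apply]
      exact Complex.polarCoord.right_inv hp
    have hmem : Complex.polarCoord.symm p ∈ R ↔ p ∈ S := by
      conv_rhs => rw [← hp']
      exact Iff.rfl
    by_cases h : p ∈ S
    · rw [indicator_of_mem h, indicator_of_mem (hmem.2 h), Pi.one_apply, smul_eq_mul, mul_one]
    · rw [indicator_of_notMem h, indicator_of_notMem (mt hmem.1 h), smul_zero]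
  rw [← lintegral_indicator_one hR, ← Complex.lintegral_comp_polarCoord_symm,
    setLIntegral_congr_fun polarCoord.open_target.measurableSet hpolar, polarCoord_target,
    Measure.volume_eq_prod, ← Measure.prod_restrict,
    lintegral_prod_symm _ ((measurable_fst.ennreal_ofReal.indicator hS).aemeasurable)]
  refine lintegral_congr fun θ => ?_
  change ∫⁻ r in Ioi 0, (Iic (ρ θ)).indicator (fun r => ENNReal.ofReal r) r = _
  rw [lintegral_indicator measurableSet_Iic, Measure.restrict_restrict measurableSet_Iic,
    Iic_inter_Ioi, setLIntegral_Ioc_ofReal_id (hρ₀ θ)]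

theorem Complex.real_inner_eq_norm_mul_norm_mul_cos_arg_sub (z w : ℂ) :
    ⟪z, w⟫ = ‖z‖ * ‖w‖ * Real.cos (arg z - arg w) := by
  rw [Complex.inner, Real.cos_sub, Complex.mul_re, Complex.conj_re, Complex.conj_im,
    ← norm_mul_cos_arg z, ← norm_mul_cos_arg w, ← norm_mul_sin_arg z, ← norm_mul_sin_arg w]
  ring

theorem abs_le_or_two_pi_sub_le_abs_of_cos_le_cos {w x : ℝ} (hw : w ∈ Icc 0 π)
    (hx : |x| ≤ 2 * π) (h : cos w ≤ cos x) : |x| ≤ w ∨ 2 * π - w ≤ |x| := by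
  rw [← cos_abs x] at h
  rcases le_or_gt |x| π with hxπ | hxπ
  · exact .inl ((strictAntiOn_cos.le_iff_ge hw ⟨abs_nonneg x, hxπ⟩).1 h)
  · rw [← cos_two_pi_sub |x|] at h
    have := (strictAntiOn_cos.le_iff_ge hw ⟨by linarith, by linarith⟩).1 h
    exact .inr (by linarith)

theorem volume_setOf_cos_le_cos_sub_le {φ w : ℝ} (hφ : φ ∈ Ioc (-π) π) (hw : w ∈ Icc 0 π) :
    volume {θ ∈ Ioo (-π) π | cos w ≤ cos (θ - φ)} ≤ ENNReal.ofReal (2 * w) := by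
  obtain ⟨hφ₁, hφ₂⟩ := hφ
  have hsub : {θ ∈ Ioo (-π) π | cos w ≤ cos (θ - φ)} ⊆
      Icc (max (φ - w) (-π)) (min (φ + w) π) ∪ Icc (φ + 2 * π - w) π ∪
        Icc (-π) (φ - 2 * π + w) := by
    rintro θ ⟨⟨hθ₁, hθ₂⟩, hcos⟩
    rcases abs_le_or_two_pi_sub_le_abs_of_cos_le_cos hw
      (abs_le.2 ⟨by linarith, by linarith⟩) hcos with h | h
    · obtain ⟨h₁, h₂⟩ := abs_le.1 h
      exact .inl (.inl ⟨max_le (by linarith) hθ₁.le, le_min (by linarith) hθ₂.le⟩)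
    · rcases abs_cases (θ - φ) with ⟨habs, -⟩ | ⟨habs, -⟩ <;> rw [habs] at h
      · exact .inl (.inr ⟨by linarith, hθ₂.le⟩)
      · exact .inr ⟨hθ₁.le, by linarith⟩
  refine (measure_mono hsub).trans <| (measure_union_le _ _).trans <|
    (add_le_add_left (measure_union_le _ _) _).trans ?_
  have hmax : ∀ x : ℝ, ENNReal.ofReal x = ENNReal.ofReal (max x 0) := fun x => by
    rcases le_total x 0 with h | h <;> simp [h]
  rw [Real.volume_Icc, Real.volume_Icc, Real.volume_Icc, hmax (min _ _ - _), hmax (π - _),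
    hmax (_ - -π), ← ENNReal.ofReal_add (le_max_right _ 0) (le_max_right _ 0),
    ← ENNReal.ofReal_add (by positivity) (le_max_right _ 0)]
  refine ENNReal.ofReal_le_ofReal ?_
  simp only [max_def, min_def]
  split_ifs <;> linarith [hw.1, hw.2]

theorem cos_pi_div_pos {n : ℕ} (hn : 2 < n) : 0 < cos (π / n) := by
  have hn' : (2 : ℝ) < n := by exact_mod_cast hn
  have : π / n < π / 2 := div_lt_div_of_pos_left pi_pos two_pos hn'
  exact cos_pos_of_mem_Ioo ⟨by linarith [div_pos pi_pos (two_pos.trans hn')], this⟩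

theorem cos_div_two_mul_pos {n : ℕ} (hn : 2 < n) {s : ℝ} (hs : s ∈ Icc 0 (2 * π)) :
    0 < cos (s / (2 * n)) := by
  have hs' : s / (2 * n) ≤ π / n := by
    rw [← div_div]
    gcongr
    linarith [hs.2]
  refine (cos_pi_div_pos hn).trans_le <|
    cos_le_cos_of_nonneg_of_le_pi (div_nonneg hs.1 (by positivity)) ?_ hs'
  exact div_le_self pi_pos.le (by norm_cast; omega)

theorem volume_setOf_cos_div_two_mul_lt_le {n : ℕ} (hn : 0 < n) {q : ℝ} (hq₀ : -1 ≤ q)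
    (hq₁ : q ≤ 1) :
    volume {s ∈ Ioo 0 (2 * π) | cos (s / (2 * n)) < q} ≤
      ENNReal.ofReal (2 * π - 2 * n * arccos q) := by
  have hn' : (0 : ℝ) < 2 * n := by positivity
  calc _ ≤ volume (Ioo (2 * n * arccos q) (2 * π)) := by
        refine measure_mono fun s ⟨hs, hcos⟩ => ⟨?_, hs.2⟩
        by_contra! h
        have hs' : s / (2 * n) ≤ arccos q := by rwa [div_le_iff₀' hn']
        have := cos_le_cos_of_nonneg_of_le_pi (div_nonneg hs.1.le hn'.le) (arccos_le_pi q) hs'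
        rw [cos_arccos hq₀ hq₁] at this
        exact hcos.not_ge this
    _ = _ := Real.volume_Ioo

theorem hasDerivAt_mul_tan_div_two_mul {n : ℕ} (hn : 0 < n) {s : ℝ} (hs : cos (s / (2 * n)) ≠ 0) :
    HasDerivAt (fun x => n * tan (x / (2 * n))) ((cos (s / (2 * n)))⁻¹ ^ 2 / 2) s := by
  have hn' : (n : ℝ) ≠ 0 := by positivity
  have := ((hasDerivAt_tan hs).comp s ((hasDerivAt_id s).div_const (2 * n))).const_mul (n : ℝ)
  refine this.congr_deriv ?_
  field_simp

theorem lintegral_inv_cos_div_two_mul_sq {n : ℕ} (hn : 2 < n) :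
    ∫⁻ s in Ioo 0 (2 * π), ENNReal.ofReal ((cos (s / (2 * n)))⁻¹ ^ 2 / 2) =
      ENNReal.ofReal (n * tan (π / n)) := by
  have hcos : ∀ s ∈ uIcc 0 (2 * π), 0 < cos (s / (2 * n)) := fun s hs =>
    cos_div_two_mul_pos hn (by rwa [uIcc_of_le (by positivity)] at hs)
  have hint : IntervalIntegrable (fun s => (cos (s / (2 * n)))⁻¹ ^ 2 / 2) volume 0 (2 * π) :=
    (ContinuousOn.div_const (ContinuousOn.pow (ContinuousOn.inv₀ (by fun_prop)
      fun s hs => (hcos s hs).ne') 2) 2).intervalIntegrable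
  rw [← ofReal_integral_eq_lintegral_ofReal, ← integral_Ioc_eq_integral_Ioo,
    ← intervalIntegral.integral_of_le (by positivity),
    intervalIntegral.integral_eq_sub_of_hasDerivAt
      (fun s hs => hasDerivAt_mul_tan_div_two_mul (by omega) (hcos s hs).ne') hint]
  · congr 1
    rw [zero_div, tan_zero, mul_zero, sub_zero, mul_div_mul_left _ _ two_ne_zero]
  · exact (hint.1.mono_set Ioo_subset_Ioc_self)
  · exact ae_of_all _ fun s => by positivity

theorem lt_inv_sq_div_two_iff {x t : ℝ} (hx : 0 < x) (ht : 0 < t) :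
    t < x⁻¹ ^ 2 / 2 ↔ x < (√(2 * t))⁻¹ := by
  rw [lt_inv_comm₀ hx (by positivity), sqrt_lt' (by positivity)]
  constructor <;> intro h <;> linarith

section TruncatedGauge

variable {ι : Type*} [Fintype ι] [Nonempty ι] (c : ℝ) (φ : ι → ℝ)

/-- The gauge in direction `θ` of the polygon `{z | ∀ i, ⟪z, exp (φ i * I)⟫ ≤ 1}`, floored at `c`
so that its reciprocal stays finite. -/
noncomputable def truncatedGauge (θ : ℝ) : ℝ :=
  max c (Finset.univ.sup' Finset.univ_nonempty fun i => cos (θ - φ i))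

variable {c}

theorem truncatedGauge_pos (hc : 0 < c) (θ : ℝ) : 0 < truncatedGauge c φ θ :=
  hc.trans_le (le_max_left _ _)

theorem truncatedGauge_le_one (hc : c ≤ 1) (θ : ℝ) : truncatedGauge c φ θ ≤ 1 :=
  max_le hc (Finset.sup'_le _ _ fun _ _ => cos_le_one _)

theorem cos_sub_le_truncatedGauge (i : ι) (θ : ℝ) : cos (θ - φ i) ≤ truncatedGauge c φ θ :=
  (Finset.le_sup' (fun j => cos (θ - φ j)) (Finset.mem_univ i)).trans (le_max_right _ _)

theorem le_truncatedGauge_iff {q θ : ℝ} :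
    q ≤ truncatedGauge c φ θ ↔ q ≤ c ∨ ∃ i, q ≤ cos (θ - φ i) := by
  simp [truncatedGauge, Finset.le_sup'_iff]

@[fun_prop]
theorem continuous_truncatedGauge : Continuous (truncatedGauge c φ) :=
  continuous_const.max (Continuous.finset_sup'_apply _ fun i _ => by fun_prop)

theorem ofReal_le_volume_truncatedGauge_lt (hφ : ∀ i, φ i ∈ Ioc (-π) π) {q : ℝ} (hcq : c < q)
    (hq₀ : -1 ≤ q) (hq₁ : q ≤ 1) :
    ENNReal.ofReal (2 * π - 2 * card ι * arccos q) ≤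
      volume {θ ∈ Ioo (-π) π | truncatedGauge c φ θ < q} := by
  set w := arccos q
  have hw : w ∈ Icc 0 π := ⟨arccos_nonneg q, arccos_le_pi q⟩
  have hcover : Ioo (-π) π ⊆ {θ ∈ Ioo (-π) π | truncatedGauge c φ θ < q} ∪
      ⋃ i, {θ ∈ Ioo (-π) π | cos w ≤ cos (θ - φ i)} := by
    intro θ hθ
    rcases lt_or_ge (truncatedGauge c φ θ) q with h | h
    · exact .inl ⟨hθ, h⟩
    · obtain h | ⟨i, hi⟩ := (le_truncatedGauge_iff φ).1 h
      · exact absurd hcq h.not_gt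
      · exact .inr (mem_iUnion.2 ⟨i, hθ, by rwa [cos_arccos hq₀ hq₁]⟩)
  have harcs : volume (⋃ i, {θ ∈ Ioo (-π) π | cos w ≤ cos (θ - φ i)}) ≤
      ENNReal.ofReal (2 * card ι * w) := by
    calc _ ≤ ∑ i, volume {θ ∈ Ioo (-π) π | cos w ≤ cos (θ - φ i)} := measure_iUnion_fintype_le _ _
      _ ≤ ∑ _i : ι, ENNReal.ofReal (2 * w) :=
        Finset.sum_le_sum fun i _ => volume_setOf_cos_le_cos_sub_le (hφ i) hw
      _ = ENNReal.ofReal (2 * card ι * w) := by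
        rw [Finset.sum_const, Finset.card_univ, nsmul_eq_mul, ← ENNReal.ofReal_natCast,
          ← ENNReal.ofReal_mul (by positivity)]
        ring_nf
  rw [ENNReal.ofReal_sub _ (mul_nonneg (by positivity) hw.1), tsub_le_iff_right]
  calc ENNReal.ofReal (2 * π) = volume (Ioo (-π) π) := by rw [Real.volume_Ioo]; ring_nf
    _ ≤ _ := (measure_mono hcover).trans (measure_union_le _ _)
    _ ≤ _ := add_le_add_right harcs _

theorem volume_cos_div_lt_le_volume_truncatedGauge_lt (hι : 2 < card ι)
    (hφ : ∀ i, φ i ∈ Ioc (-π) π) {q : ℝ} (hq : 0 < q) :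
    volume {s ∈ Ioo 0 (2 * π) | cos (s / (2 * card ι)) < q} ≤
      volume {θ ∈ Ioo (-π) π | truncatedGauge (cos (π / card ι)) φ θ < q} := by
  set n := card ι
  rcases lt_or_ge 1 q with hq₁ | hq₁
  · have hfull : {θ ∈ Ioo (-π) π | truncatedGauge (cos (π / n)) φ θ < q} = Ioo (-π) π :=
      sep_eq_self_iff_mem_true.2 fun θ _ => (truncatedGauge_le_one φ (cos_le_one _) θ).trans_lt hq₁
    calc _ ≤ volume (Ioo 0 (2 * π)) := measure_mono (sep_subset _ _)
      _ = _ := by rw [hfull, Real.volume_Ioo, Real.volume_Ioo]; ring_nf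
  refine (volume_setOf_cos_div_two_mul_lt_le (by omega) (by linarith) hq₁).trans ?_
  rcases le_or_gt q (cos (π / n)) with hqc | hcq
  · have : π / n ≤ arccos q := by
      rw [← arccos_cos (by positivity) (div_le_self pi_pos.le (by norm_cast; omega))]
      exact arccos_le_arccos hqc
    rw [div_le_iff₀' (by positivity)] at this
    rw [ENNReal.ofReal_eq_zero.2 (by linarith)]
    exact zero_le
  · exact ofReal_le_volume_truncatedGauge_lt φ hφ hcq (by linarith) hq₁

theorem ofReal_card_mul_tan_le_lintegral_truncatedGauge (hι : 2 < card ι)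
    (hφ : ∀ i, φ i ∈ Ioc (-π) π) :
    ENNReal.ofReal (card ι * tan (π / card ι)) ≤
      ∫⁻ θ in Ioo (-π) π, ENNReal.ofReal ((truncatedGauge (cos (π / card ι)) φ θ)⁻¹ ^ 2 / 2) := by
  have hc : 0 < cos (π / card ι) := cos_pi_div_pos hι
  rw [← lintegral_inv_cos_div_two_mul_sq hι]
  refine lintegral_ofReal_le_of_meas_lt_le (ae_of_all _ fun _ => by positivity)
    (by fun_prop) (ae_of_all _ fun _ => by positivity) (by fun_prop) fun t ht => ?_
  rw [Measure.restrict_apply' measurableSet_Ioo, Measure.restrict_apply' measurableSet_Ioo]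
  convert volume_cos_div_lt_le_volume_truncatedGauge_lt φ hι hφ
    (inv_pos.2 (sqrt_pos.2 (mul_pos two_pos ht))) using 2
  · exact Set.ext fun s => and_comm.trans <| and_congr_right fun hs =>
      lt_inv_sq_div_two_iff (cos_div_two_mul_pos hι (Ioo_subset_Icc_self hs)) ht
  · exact Set.ext fun θ => and_comm.trans <| and_congr_right fun _ =>
      lt_inv_sq_div_two_iff (truncatedGauge_pos φ hc θ) ht

theorem setOf_norm_le_inv_truncatedGauge_subset (hc : 0 < c) {u : ι → ℂ} (hu : ∀ i, ‖u i‖ = 1) :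
    {z : ℂ | ‖z‖ ≤ (truncatedGauge c (Complex.arg ∘ u) (Complex.arg z))⁻¹} ⊆
      {z | ∀ i, ⟪z, u i⟫ ≤ 1} := by
  intro z hz i
  have hg := truncatedGauge_pos (Complex.arg ∘ u) hc (Complex.arg z)
  calc ⟪z, u i⟫ = ‖z‖ * cos (Complex.arg z - Complex.arg (u i)) := by
        rw [Complex.real_inner_eq_norm_mul_norm_mul_cos_arg_sub, hu i, mul_one]
    _ ≤ ‖z‖ * truncatedGauge c (Complex.arg ∘ u) (Complex.arg z) :=
        mul_le_mul_of_nonneg_left (cos_sub_le_truncatedGauge (c := c) (Complex.arg ∘ u) i _)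
          (norm_nonneg z)
    _ ≤ 1 := (le_div_iff₀ hg).1 (by rw [one_div]; exact hz)

end TruncatedGauge

theorem ofReal_card_mul_tan_le_volume_setOf_inner_le_one {ι : Type*} [Fintype ι]
    (hι : 2 < card ι) {u : ι → ℂ} (hu : ∀ i, ‖u i‖ = 1) :
    ENNReal.ofReal (card ι * tan (π / card ι)) ≤ volume {z : ℂ | ∀ i, ⟪z, u i⟫ ≤ 1} := by
  have : Nonempty ι := card_pos_iff.1 (by omega)
  set c := cos (π / card ι)
  have hc : 0 < c := cos_pi_div_pos hι
  calc _ ≤ ∫⁻ θ in Ioo (-π) π, ENNReal.ofReal ((truncatedGauge c (Complex.arg ∘ u) θ)⁻¹ ^ 2 / 2) :=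
        ofReal_card_mul_tan_le_lintegral_truncatedGauge _ hι fun i => Complex.arg_mem_Ioc (u i)
    _ = volume {z : ℂ | ‖z‖ ≤ (truncatedGauge c (Complex.arg ∘ u) (Complex.arg z))⁻¹} :=
        (volume_setOf_norm_le_comp_arg (by fun_prop)
          fun θ => (inv_pos.2 (truncatedGauge_pos _ hc θ)).le).symm
    _ ≤ _ := measure_mono (setOf_norm_le_inv_truncatedGauge_subset hc hu)

theorem one_le_of_ball_subset_setOf_inner_le {E : Type*} [NormedAddCommGroup E]
    [InnerProductSpace ℝ E] {u : E} (hu : ‖u‖ = 1) {b : ℝ}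
    (h : ball (0 : E) 1 ⊆ {x | ⟪x, u⟫ ≤ b}) : 1 ≤ b := by
  refine le_of_forall_lt_imp_le_of_dense fun s hs => (le_max_left s 0).trans ?_
  have hmem : max s 0 • u ∈ ball 0 1 := by
    simpa [norm_smul, hu, abs_of_nonneg (le_max_right s 0)] using hs
  simpa [inner_smul_left, real_inner_self_eq_norm_sq, hu] using h hmem

theorem ofReal_card_mul_tan_le_volume_of_ball_subset {ι : Type*} [Fintype ι] (hι : 2 < card ι)
    {u : ι → EuclideanSpace ℝ (Fin 2)} (hu : ∀ i, ‖u i‖ = 1) {b : ι → ℝ}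
    (hball : ball 0 1 ⊆ ⋂ i, {x | ⟪x, u i⟫ ≤ b i}) :
    ENNReal.ofReal (card ι * tan (π / card ι)) ≤ volume (⋂ i, {x | ⟪x, u i⟫ ≤ b i}) := by
  set e := Complex.orthonormalBasisOneI
  have hb : ∀ i, 1 ≤ b i := fun i =>
    one_le_of_ball_subset_setOf_inner_le (hu i) (hball.trans (iInter_subset _ i))
  have hpre : e.measurableEquiv ⁻¹' {x | ∀ i, ⟪x, u i⟫ ≤ 1} =
      {z : ℂ | ∀ i, ⟪z, e.repr.symm (u i)⟫ ≤ 1} := by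
    ext z
    refine forall_congr' fun i => ?_
    change ⟪e.repr z, u i⟫ ≤ 1 ↔ _
    rw [LinearIsometryEquiv.inner_map_eq_flip]
  calc _ ≤ volume {z : ℂ | ∀ i, ⟪z, e.repr.symm (u i)⟫ ≤ 1} :=
        ofReal_card_mul_tan_le_volume_setOf_inner_le_one hι fun i => by simpa using hu i
    _ = volume {x | ∀ i, ⟪x, u i⟫ ≤ 1} := by
        rw [← hpre, e.measurePreserving_measurableEquiv.measure_preimage_equiv]
    _ ≤ _ := measure_mono fun x hx => mem_iInter.2 fun i => (hx i).trans (hb i)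

/-- A convex region of the Euclidean plane that is an intersection of at most `6` half-planes
(a convex polygon with at most six sides) and contains the unit disk has area at least
`2√3`, the area of the regular hexagon circumscribed about the unit circle. -/
theorem hexagon_isoperimetric_cell_bound
    (u : Fin 6 → EuclideanSpace ℝ (Fin 2)) (hu : ∀ i, ‖u i‖ = 1) (b : Fin 6 → ℝ)
    (K : Set (EuclideanSpace ℝ (Fin 2)))
    (hK : K = ⋂ i : Fin 6, {x : EuclideanSpace ℝ (Fin 2) | ⟪x, u i⟫ ≤ b i})
    (hball : ball (0 : EuclideanSpace ℝ (Fin 2)) 1 ⊆ K) :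
    ENNReal.ofReal (2 * Real.sqrt 3) ≤ volume K := by
  subst hK
  have h := ofReal_card_mul_tan_le_volume_of_ball_subset (by simp) hu hball
  have h6 : ((card (Fin 6) : ℕ) : ℝ) * tan (π / card (Fin 6)) = 2 * √3 := by
    rw [card_fin, Nat.cast_ofNat, tan_pi_div_six]
    field_simp
    norm_num
  rwa [h6] at h
end
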